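/- arXiv:0901.4023 — 4 statements merged into one kernel-verified Lean document; each statement's English description precedes it below -/
import Mathlib

section
/- Under the setup of Theorem 1, if μ is the uniform distribution on X (so μ(x) > 0 for all x ∈ X), Enc is perfectly secure, T₀ = X \ Z₁ where Z₁ = {x : StDec(x) begins with 1}, and T_{k+1} = T_k ∪ {Enc(x, 1u) : x ∈ T_k, u ∈ {0,1}*}, then the stabilized set T_{k₀} equals all of X. -/
/-!
Perfect security says that encrypting a μ-distributed cover with a uniformly random key
reproduces μ. Let Z = X \ T_{k₀}. A cover landing in Z must come from a cover already in Z
(T_{k₀} is closed under keys starting with 1) under a key starting with 1 (keys starting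
with 0 decode to messages starting with 0, so they land in T₀). Hence μ(Z) ≤ μ(Z)/2, and
μ(Z) = 0 forces Z = ∅ since μ is positive on X.
-/

open Finset

section PerfectSecurity

variable {α β : Type*} [Fintype α] [Fintype β] [DecidableEq α] (μ : α → ℝ) (c : ℝ) (Enc : α → β → α)

lemma pos_encrypt_of_pos (hμ : ∀ x, 0 ≤ μ x) (hc : 0 < c)
    (hsec : ∀ x', ∑ x, ∑ y, μ x * c * (if Enc x y = x' then 1 else 0) = μ x')
    {x : α} (hx : 0 < μ x) (y : β) : 0 < μ (Enc x y) := by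
  rw [← hsec]
  refine sum_pos' (fun x' _ => sum_nonneg fun y' _ => ?_) ⟨x, mem_univ x, ?_⟩
  · have := hμ x'
    positivity
  refine sum_pos' (fun y' _ => ?_) ⟨y, mem_univ y, by simpa using mul_pos hx hc⟩
  have := hμ x
  positivity

lemma sum_eq_sum_mul_card_encrypt_mem
    (hsec : ∀ x', ∑ x, ∑ y, μ x * c * (if Enc x y = x' then 1 else 0) = μ x') (Z : Finset α) :
    ∑ x' ∈ Z, μ x' = ∑ x, μ x * c * #{y | Enc x y ∈ Z} := by
  calc ∑ x' ∈ Z, μ x'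
      = ∑ x' ∈ Z, ∑ x, ∑ y, μ x * c * (if Enc x y = x' then 1 else 0) :=
        sum_congr rfl fun x' _ => (hsec x').symm
    _ = ∑ x, ∑ y, ∑ x' ∈ Z, μ x * c * (if Enc x y = x' then 1 else 0) := by
        rw [sum_comm]
        exact sum_congr rfl fun x _ => sum_comm
    _ = ∑ x, μ x * c * #{y | Enc x y ∈ Z} := by
        simp only [← mul_sum, sum_ite_eq, sum_boole]

lemma eq_zero_of_encrypt_mem_imp (hμ : ∀ x, 0 ≤ μ x) (hc : 0 ≤ c)
    (hsec : ∀ x', ∑ x, ∑ y, μ x * c * (if Enc x y = x' then 1 else 0) = μ x')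
    (Z : Finset α) (F : Finset β) (hF : c * #F < 1)
    (hZ : ∀ x, 0 < μ x → ∀ y, Enc x y ∈ Z → x ∈ Z ∧ y ∈ F) :
    ∀ x ∈ Z, μ x = 0 := by
  have hbound : ∀ x, μ x * c * #{y | Enc x y ∈ Z} ≤ if x ∈ Z then μ x * c * #F else 0 := by
    intro x
    rcases (hμ x).eq_or_lt with hx | hx
    · simp [← hx]
    have hsub : ({y | Enc x y ∈ Z} : Finset β) ⊆ if x ∈ Z then F else ∅ := by
      intro y hy
      obtain ⟨hxZ, hyF⟩ := hZ x hx y (mem_filter.mp hy).2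
      simpa [hxZ] using hyF
    have hcard := card_le_card hsub
    split_ifs at hcard ⊢ with hxZ
    · gcongr
    · simp_all
  have hle : ∑ x ∈ Z, μ x ≤ c * #F * ∑ x ∈ Z, μ x :=
    calc ∑ x ∈ Z, μ x = ∑ x, μ x * c * #{y | Enc x y ∈ Z} :=
          sum_eq_sum_mul_card_encrypt_mem μ c Enc hsec Z
      _ ≤ ∑ x, if x ∈ Z then μ x * c * #F else 0 := sum_le_sum fun x _ => hbound x
      _ = c * #F * ∑ x ∈ Z, μ x := by
        rw [sum_ite_mem, univ_inter, mul_sum]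
        exact sum_congr rfl fun x _ => by ring
  have hnn : 0 ≤ ∑ x ∈ Z, μ x := sum_nonneg fun x _ => hμ x
  have hsum : ∑ x ∈ Z, μ x = 0 := by nlinarith
  exact (sum_eq_zero_iff_of_nonneg fun x _ => hμ x).mp hsum

end PerfectSecurity

lemma pos_iff_mem_of_eq_uniform {α : Type*} [DecidableEq α] {μ : α → ℝ} {X : Finset α}
    (hμ : ∀ x, μ x = if x ∈ X then ((#X : ℝ))⁻¹ else 0) (x : α) : 0 < μ x ↔ x ∈ X := by
  rw [hμ]
  split_ifs with hx
  · exact iff_of_true (inv_pos.mpr (Nat.cast_pos.mpr (card_pos.mpr ⟨x, hx⟩))) hx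
  · simpa using hx

section Saturation

variable {α β : Type*} {T : ℕ → Set α} {f : α → β → α} {P : β → Prop}
  (hTs : ∀ k, T (k + 1) = T k ∪ {x' | ∃ x ∈ T k, ∃ y, P y ∧ f x y = x'})
include hTs

lemma monotone_of_succ_eq_union : Monotone T :=
  monotone_nat_of_le_succ fun k => hTs k ▸ Set.subset_union_left

lemma apply_mem_of_stable {k₀ : ℕ} (hstab : ∀ k, k₀ ≤ k → T k = T k₀) {x : α} (hx : x ∈ T k₀)
    {y : β} (hy : P y) : f x y ∈ T k₀ :=
  hstab (k₀ + 1) k₀.le_succ ▸ hTs k₀ ▸ Or.inr ⟨x, hx, y, hy, rfl⟩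

lemma subset_of_mapsTo {S : Set α} (h0 : T 0 ⊆ S) (hS : ∀ x ∈ S, ∀ y, f x y ∈ S) (k : ℕ) :
    T k ⊆ S := by
  induction k with
  | zero => exact h0
  | succ k ih =>
    rw [hTs k]
    rintro _ (hx | ⟨x, hx, y, -, rfl⟩)
    exacts [ih hx, hS x (ih hx) y]

end Saturation

lemma card_filter_apply_zero_eq_true_lt (m : ℕ) :
    #({y | y 0 = true} : Finset (Fin (m + 1) → Bool)) < 2 ^ (m + 1) := by
  simpa using card_lt_univ_of_notMem (x := fun _ : Fin (m + 1) => false)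
    (s := {y | y 0 = true}) (by simp)

lemma ne_true_cons_of_eq_take_ofFn {m : ℕ} {l : List Bool} {y : Fin (m + 1) → Bool}
    (h : l = (List.ofFn y).take l.length) (hy : y 0 = false) (u : List Bool) :
    l ≠ true :: u := by
  rintro rfl
  simp [List.ofFn_succ, hy] at h

theorem stmt9_general (n m : ℕ) (X : Finset (Fin n → Bool))
    (Enc : (Fin n → Bool) → (Fin (m + 1) → Bool) → (Fin n → Bool))
    (StDec : (Fin n → Bool) → List Bool)
    (μ : (Fin n → Bool) → ℝ)
    (hμ : ∀ x, μ x = if x ∈ X then ((X.card : ℝ))⁻¹ else 0)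
    (hsec : ∀ x' : Fin n → Bool,
      (∑ x, ∑ y : Fin (m + 1) → Bool,
        μ x * ((2 : ℝ) ^ (m + 1))⁻¹ * (if Enc x y = x' then 1 else 0)) = μ x')
    (hcorrect : ∀ x y, StDec (Enc x y) = (List.ofFn y).take (StDec (Enc x y)).length)
    (Z₁ : Set (Fin n → Bool))
    (hZ₁ : Z₁ = {x | x ∈ X ∧ ∃ u : List Bool, StDec x = true :: u})
    (T : ℕ → Set (Fin n → Bool))
    (hT0 : T 0 = ↑X \ Z₁)
    (hTs : ∀ k, T (k + 1) =
      T k ∪ {x' | ∃ x ∈ T k, ∃ y : Fin (m + 1) → Bool, y 0 = true ∧ Enc x y = x'})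
    (k₀ : ℕ) (hstab : ∀ k, k₀ ≤ k → T k = T k₀) :
    T k₀ = ↑X := by
  classical
  have hpos := pos_iff_mem_of_eq_uniform hμ
  have hnn : ∀ x, 0 ≤ μ x := fun x => by rw [hμ]; positivity
  have hEnc : ∀ x ∈ X, ∀ y, Enc x y ∈ X := fun x hx y =>
    (hpos _).mp (pos_encrypt_of_pos μ _ Enc hnn (by positivity) hsec ((hpos x).mpr hx) y)
  have hkey0 : ∀ x ∈ X, ∀ y, y 0 = false → Enc x y ∈ T k₀ := by
    refine fun x hx y hy => monotone_of_succ_eq_union hTs k₀.zero_le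
      (hT0 ▸ ⟨hEnc x hx y, fun hZ => ?_⟩)
    obtain ⟨-, u, hu⟩ := hZ₁ ▸ hZ
    exact ne_true_cons_of_eq_take_ofFn (hcorrect x y) hy u hu
  have hF : ((2 : ℝ) ^ (m + 1))⁻¹ * #({y | y 0 = true} : Finset (Fin (m + 1) → Bool)) < 1 := by
    rw [inv_mul_lt_one₀ (by positivity)]
    exact_mod_cast card_filter_apply_zero_eq_true_lt m
  have hzero := eq_zero_of_encrypt_mem_imp μ _ Enc hnn (by positivity) hsec
    {x ∈ X | x ∉ T k₀} {y | y 0 = true} hF fun x hx y hxy => by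
      obtain ⟨-, hyT⟩ := mem_filter.mp hxy
      have hxX := (hpos x).mp hx
      have hy : y 0 = true := by
        by_contra hy
        exact hyT (hkey0 x hxX y (by simpa using hy))
      refine ⟨mem_filter.mpr ⟨hxX, fun hxT => hyT ?_⟩, by simpa using hy⟩
      exact apply_mem_of_stable hTs hstab hxT hy
  refine (subset_of_mapsTo hTs (hT0 ▸ Set.sdiff_subset) hEnc k₀).antisymm fun x hx => ?_
  by_contra hxT
  exact ((hpos x).mpr hx).ne' (hzero x (mem_filter.mpr ⟨hx, hxT⟩))

/-- Coverage: with μ uniform on X, a perfectly secure and correctly decodable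
stegosystem, T₀ = X \ Z₁ (Z₁ the words decoding to a message starting with 1)
and T_{k+1} = T_k ∪ {Enc(x,1u) : x ∈ T_k}, any stabilized set T_{k₀} equals X. -/
theorem stmt9 (n m : ℕ) (X : Finset (Fin n → Bool)) (hXne : X.Nonempty)
    (Enc : (Fin n → Bool) → (Fin (m + 1) → Bool) → (Fin n → Bool))
    (StDec : (Fin n → Bool) → List Bool)
    (μ : (Fin n → Bool) → ℝ)
    (hμ : ∀ x, μ x = if x ∈ X then ((X.card : ℝ))⁻¹ else 0)
    (hsec : ∀ x' : Fin n → Bool,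
      (∑ x, ∑ y : Fin (m + 1) → Bool,
        μ x * ((2 : ℝ) ^ (m + 1))⁻¹ * (if Enc x y = x' then 1 else 0)) = μ x')
    (hcorrect : ∀ x y, StDec (Enc x y) = (List.ofFn y).take (StDec (Enc x y)).length)
    (Z₁ : Set (Fin n → Bool))
    (hZ₁ : Z₁ = {x | x ∈ X ∧ ∃ u : List Bool, StDec x = true :: u})
    (T : ℕ → Set (Fin n → Bool))
    (hT0 : T 0 = ↑X \ Z₁)
    (hTs : ∀ k, T (k + 1) =
      T k ∪ {x' | ∃ x ∈ T k, ∃ y : Fin (m + 1) → Bool, y 0 = true ∧ Enc x y = x'})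
    (k₀ : ℕ) (hstab : ∀ k, k₀ ≤ k → T k = T k₀) :
    T k₀ = ↑X :=
  stmt9_general n m X Enc StDec μ hμ hsec hcorrect Z₁ hZ₁ T hT0 hTs k₀ hstab
end

section
/- For every δ > 0 there exists, for each n, a distribution P_n on {0,1}^n with Shannon entropy h(P_n) ≥ n - 1, such that every perfectly secure stegosystem St_n for P_n with expected transmission speed v_n(St_n) ≥ δ satisfies log₂ K(St_n) ≥ c·n for some constant c > 0 and all sufficiently large n. -/
/-!
Perfect security forces the encoder to map every cover in the support `X` of `P_n` back into `X`,
and speed `δ` forces some cover `x ∈ X` at which the secret strings decoded to at least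
`L ≈ δ n / 2` bits are encoded onto at least `≈ 2 ^ L` distinct stegotexts, all in `X`: such a
stegotext fixes the first `L` secret bits. A stegosystem of complexity below `m` is one of fewer
than `2 ^ m`, so with the cover `x` it yields fewer than `2 ^ (m + n)` such sets of stegotexts of
size `m + n`, and a union bound over the `2 ^ (n - 1)`-subsets of `{0,1}^n` gives an `X`
containing none of them. For that `X` every fast perfectly secure stegosystem has complexity at
least `2 ^ (c n)`.
-/

open Finset

namespace Nat

theorem two_mul_choose_le_choose_add_one {a b : ℕ} (h : 2 * (b + 1) ≤ a + 1) :
    2 * a.choose b ≤ (a + 1).choose (b + 1) := by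
  refine Nat.le_of_mul_le_mul_right ?_ b.succ_pos
  calc 2 * a.choose b * (b + 1) = 2 * (b + 1) * a.choose b := by ring
    _ ≤ (a + 1) * a.choose b := Nat.mul_le_mul_right _ h
    _ = (a + 1).choose (b + 1) * (b + 1) := add_one_mul_choose_eq a b

theorem two_pow_mul_choose_le_choose_add {a b : ℕ} (r : ℕ) (h : 2 * (b + r) ≤ a + r) :
    2 ^ r * a.choose b ≤ (a + r).choose (b + r) := by
  induction r with
  | zero => simp
  | succ r ih =>
    calc 2 ^ (r + 1) * a.choose b = 2 * (2 ^ r * a.choose b) := by ring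
      _ ≤ 2 * (a + r).choose (b + r) := Nat.mul_le_mul_left 2 (ih (by omega))
      _ ≤ (a + r + 1).choose (b + r + 1) := two_mul_choose_le_choose_add_one (by omega)

theorem mul_two_pow_add_le_two_pow_div {k n : ℕ} (hk : 1 ≤ k) (hn : 8 * k * k ≤ n) :
    k * (2 ^ (n / (8 * k) + 1) + n) ≤ 2 ^ (n / k) := by
  set a := n / (8 * k)
  set A := 2 ^ a
  have hka : k ≤ a := (Nat.le_div_iff_mul_le (by omega)).2 (by nlinarith)
  have haA : a + 1 ≤ A := Nat.lt_two_pow_self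
  have hnA : n ≤ 8 * A * A := by
    have hkA : k ≤ A := by omega
    calc n ≤ 8 * k * (a + 1) := (Nat.lt_mul_div_succ n (by omega)).le
      _ ≤ 8 * A * A := Nat.mul_le_mul (Nat.mul_le_mul_left 8 hkA) haA
  have ha : 8 * a ≤ n / k := by
    rw [Nat.le_div_iff_mul_le hk]
    calc 8 * a * k = a * (8 * k) := by ring
      _ ≤ n := Nat.div_mul_le_self n (8 * k)
  calc k * (2 ^ (a + 1) + n) ≤ A * (2 * A + 8 * A * A) :=
        Nat.mul_le_mul (by omega) (by rw [pow_succ]; omega)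
    _ ≤ 16 * A ^ 3 := by nlinarith
    _ = 2 ^ (3 * a + 4) := by ring
    _ ≤ 2 ^ (n / k) := Nat.pow_le_pow_right two_pos (by omega)

end Nat

namespace Finset

section Powerset

variable {α : Type*} [Fintype α] [DecidableEq α]

theorem card_filter_powersetCard_superset_le {s : Finset α} {r h : ℕ} (hrs : r ≤ #s)
    (hrh : r ≤ h) :
    #{X ∈ univ.powersetCard h | s ⊆ X} ≤ (Fintype.card α - r).choose (h - r) := by
  obtain ⟨t, hts, rfl⟩ := exists_subset_card_eq hrs
  calc #{X ∈ univ.powersetCard h | s ⊆ X} ≤ #{X ∈ univ.powersetCard h | t ⊆ X} :=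
        card_le_card fun X => by
          simp only [mem_filter]
          exact fun hX => ⟨hX.1, hts.trans hX.2⟩
    _ = _ := by rw [card_filter_powersetCard_subset t univ h (subset_univ t) hrh, card_univ]

/-- Union bound: each member of `F` lies in at most a `2 ^ (-r)` fraction of the `h`-sets. -/
theorem exists_card_eq_forall_not_subset {F : Finset (Finset α)} {r h : ℕ}
    (hF : ∀ s ∈ F, r ≤ #s) (hFcard : #F < 2 ^ r) (hrh : r ≤ h) (hh : 2 * h ≤ Fintype.card α) :
    ∃ X : Finset α, #X = h ∧ ∀ s ∈ F, ¬ s ⊆ X := by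
  set N := Fintype.card α
  set U := (univ : Finset α).powersetCard h
  set c := (N - r).choose (h - r)
  have hc : 0 < c := Nat.choose_pos (by omega)
  have hbad : #(F.biUnion fun s => {X ∈ U | s ⊆ X}) < #U :=
    calc #(F.biUnion fun s => {X ∈ U | s ⊆ X}) ≤ ∑ s ∈ F, #{X ∈ U | s ⊆ X} := card_biUnion_le
      _ ≤ #F * c := by
        simpa using sum_le_card_nsmul F _ c fun s hs =>
          card_filter_powersetCard_superset_le (hF s hs) hrh
      _ < 2 ^ r * c := Nat.mul_lt_mul_of_pos_right hFcard hc
      _ ≤ N.choose h := by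
        simpa [Nat.sub_add_cancel hrh, Nat.sub_add_cancel (hrh.trans (by omega : h ≤ N))]
          using Nat.two_pow_mul_choose_le_choose_add (a := N - r) (b := h - r) r (by omega)
      _ = #U := by rw [card_powersetCard, card_univ]
  obtain ⟨X, hXU, hXbad⟩ := exists_mem_notMem_of_card_lt_card hbad
  refine ⟨X, (mem_powersetCard.1 hXU).2, fun s hs hsX => hXbad ?_⟩
  exact mem_biUnion.2 ⟨s, hs, mem_filter.2 ⟨hXU, hsX⟩⟩

end Powerset

theorem sum_le_mul_card_add_mul_card_filter_le {ι : Type*} (s : Finset ι) (f : ι → ℕ) (L : ℕ)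
    {M : ℕ} (hf : ∀ i ∈ s, f i ≤ M) :
    ∑ i ∈ s, f i ≤ L * #s + M * #{i ∈ s | L ≤ f i} := by
  rw [← sum_filter_add_sum_filter_not s (L ≤ f ·)]
  have hlong : ∑ i ∈ s with L ≤ f i, f i ≤ M * #{i ∈ s | L ≤ f i} := by
    simpa [mul_comm] using sum_le_card_nsmul _ _ M fun i hi => hf i (mem_filter.1 hi).1
  have hshort : ∑ i ∈ s with ¬L ≤ f i, f i ≤ L * #s :=
    calc ∑ i ∈ s with ¬L ≤ f i, f i ≤ #{i ∈ s | ¬L ≤ f i} • L :=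
          sum_le_card_nsmul _ _ L fun i hi => (not_le.1 (mem_filter.1 hi).2).le
      _ ≤ L * #s := by
          rw [smul_eq_mul, mul_comm]
          exact Nat.mul_le_mul_left L (card_filter_le _ _)
  omega

theorem exists_pos_le_of_le_sum_mul {ι : Type*} [Fintype ι] {P f : ι → ℝ} {c : ℝ}
    (hP : ∀ i, 0 ≤ P i) (hP1 : ∑ i, P i = 1) (h : c ≤ ∑ i, P i * f i) :
    ∃ i, 0 < P i ∧ c ≤ f i := by
  have hpos : ∀ i, P i ≠ 0 → 0 < P i := fun i hi => (hP i).lt_of_ne' hi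
  have hsupp : ∀ g : ι → ℝ, ∑ i with 0 < P i, P i * g i = ∑ i, P i * g i := fun g =>
    sum_filter_of_ne fun i _ hi => hpos i (left_ne_zero_of_mul hi)
  have hne : ({i | 0 < P i} : Finset ι).Nonempty := by
    by_contra hempty
    rw [not_nonempty_iff_eq_empty] at hempty
    have h01 := (hsupp fun _ => 1).trans (by simpa using hP1)
    simp [hempty] at h01
  obtain ⟨i, hi, hle⟩ := exists_le_of_sum_le hne (f := fun i => P i * c)
    (g := fun i => P i * f i) (by rw [hsupp, hsupp, ← sum_mul, hP1, one_mul]; exact h)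
  exact ⟨i, (mem_filter.1 hi).2, le_of_mul_le_mul_left hle (mem_filter.1 hi).2⟩

section UniformWeight

variable {α : Type*} [DecidableEq α]

noncomputable def uniformWeight (X : Finset α) (x : α) : ℝ :=
  if x ∈ X then (#X : ℝ)⁻¹ else 0

theorem uniformWeight_nonneg (X : Finset α) (x : α) : 0 ≤ X.uniformWeight x := by
  unfold uniformWeight
  split_ifs <;> positivity

theorem uniformWeight_pos_iff {X : Finset α} {x : α} : 0 < X.uniformWeight x ↔ x ∈ X := by
  unfold uniformWeight
  split_ifs with hx
  · simpa [hx] using card_pos.2 ⟨x, hx⟩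
  · simpa using hx

theorem sum_uniformWeight [Fintype α] {X : Finset α} (hX : X.Nonempty) :
    ∑ x, X.uniformWeight x = 1 := by
  simp [uniformWeight, hX.card_pos.ne']

theorem neg_sum_uniformWeight_mul_logb [Fintype α] (X : Finset α) (b : ℝ) :
    -∑ x, X.uniformWeight x * Real.logb b (X.uniformWeight x) = Real.logb b #X := by
  have hterm : ∀ x, X.uniformWeight x * Real.logb b (X.uniformWeight x) =
      if x ∈ X then (#X : ℝ)⁻¹ * Real.logb b (#X : ℝ)⁻¹ else 0 := fun x => by
    unfold uniformWeight
    split_ifs <;> simp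
  simp_rw [hterm, sum_ite_mem, univ_inter, sum_const, nsmul_eq_mul, Real.logb_inv]
  rcases X.eq_empty_or_nonempty with rfl | hX
  · simp
  · field_simp [hX.card_pos.ne']

theorem sub_one_le_neg_sum_uniformWeight_mul_logb [Fintype α] {n : ℕ} {X : Finset α}
    (hX : #X = 2 ^ (n - 1)) :
    (n : ℝ) - 1 ≤ -∑ x, X.uniformWeight x * Real.logb 2 (X.uniformWeight x) := by
  have : (n : ℝ) ≤ (n - 1 : ℕ) + 1 := by exact_mod_cast (by omega : n ≤ n - 1 + 1)
  rw [neg_sum_uniformWeight_mul_logb, hX, Nat.cast_pow, Nat.cast_ofNat, Real.logb_pow,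
    Real.logb_self_eq_one one_lt_two]
  linarith

end UniformWeight

end Finset

theorem div_le_logb_two_of_two_pow_le {n m K : ℕ} (hm : 0 < m) (hK : 2 ^ (n / m + 1) ≤ K) :
    (n : ℝ) / m ≤ Real.logb 2 K := by
  have hq : (n : ℝ) ≤ m * (n / m + 1 : ℕ) := by exact_mod_cast (Nat.lt_mul_div_succ n hm).le
  calc (n : ℝ) / m ≤ (n / m + 1 : ℕ) := by
        rw [div_le_iff₀ (by positivity)]
        linarith
    _ = Real.logb 2 ((2 ^ (n / m + 1) : ℕ) : ℝ) := by
        rw [Nat.cast_pow, Nat.cast_ofNat, Real.logb_pow, Real.logb_self_eq_one one_lt_two, mul_one]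
    _ ≤ Real.logb 2 K := Real.logb_le_logb_of_le one_lt_two (by positivity) (by exact_mod_cast hK)

section Stegosystem

variable {n : ℕ}

theorem card_le_pow_of_eqOn_lt {β : Type*} [Fintype β] {L : ℕ} (hL : L ≤ n)
    {s : Finset (Fin n → β)}
    (hs : ∀ y ∈ s, ∀ y' ∈ s, ∀ i : Fin n, (i : ℕ) < L → y i = y' i) :
    #s ≤ Fintype.card β ^ (n - L) := by
  classical
  calc #s ≤ #(univ : Finset (Fin (n - L) → β)) := by
        refine card_le_card_of_injOn (fun y i => y ⟨L + i, by omega⟩)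
          (fun _ _ => mem_coe.2 (mem_univ _)) fun y hy y' hy' hyy' => funext fun i => ?_
        by_cases hi : (i : ℕ) < L
        · exact hs y hy y' hy' i hi
        · simpa [Nat.add_sub_cancel' (not_lt.1 hi)] using congrFun hyy' ⟨i - L, by omega⟩
    _ = Fintype.card β ^ (n - L) := by simp

theorem card_le_two_pow_of_prefix {l : List Bool} {L : ℕ} (hL : L ≤ n) (hl : L ≤ l.length)
    {s : Finset (Fin n → Bool)} (hs : ∀ y ∈ s, l <+: List.ofFn y) :
    #s ≤ 2 ^ (n - L) := by
  have hprefix : ∀ y ∈ s, ∀ i : Fin n, (hi : (i : ℕ) < L) →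
      y i = l[(i : ℕ)]'(hi.trans_le hl) := fun y hy i hi => by
    rw [(hs y hy).getElem (by omega)]
    simp
  simpa using card_le_pow_of_eqOn_lt hL fun y hy y' hy' i hi =>
    (hprefix y hy i hi).trans (hprefix y' hy' i hi).symm

variable {α : Type*} [DecidableEq α]

/-- A stegotext decoded to at least `L` bits fixes a prefix of length `L` of the secret string,
so it encodes at most `2 ^ (n - L)` of them. -/
theorem two_pow_le_mul_card_image (e : (Fin n → Bool) → α) (D : α → List Bool)
    (hD : ∀ y, D (e y) <+: List.ofFn y) {k L : ℕ} (hn : 0 < n) (hkL : k * L ≤ n)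
    (hspeed : 2 * n * 2 ^ n ≤ k * ∑ y, (D (e y)).length) :
    2 ^ L ≤ k * #(({y | L ≤ (D (e y)).length} : Finset (Fin n → Bool)).image e) := by
  set B : Finset (Fin n → Bool) := {y | L ≤ (D (e y)).length}
  have hk : 0 < k := Nat.pos_of_ne_zero fun hk => by simp [hk] at hspeed; omega
  have hLn : L ≤ n := le_trans (Nat.le_mul_of_pos_left L hk) hkL
  have hB : 2 ^ n ≤ k * #B := by
    have hsum := sum_le_mul_card_add_mul_card_filter_le univ (fun y => (D (e y)).length) L
      fun y _ => by simpa using (hD y).length_le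
    rw [card_univ, Fintype.card_fun, Fintype.card_bool, Fintype.card_fin] at hsum
    have hsumB : k * ∑ y, (D (e y)).length ≤ k * L * 2 ^ n + n * (k * #B) :=
      calc k * ∑ y, (D (e y)).length ≤ k * (L * 2 ^ n + n * #B) := Nat.mul_le_mul_left k hsum
        _ = k * L * 2 ^ n + n * (k * #B) := by ring
    have hkL' : k * L * 2 ^ n ≤ n * 2 ^ n := Nat.mul_le_mul_right _ hkL
    refine Nat.le_of_mul_le_mul_left ?_ hn
    linarith
  have hfibre : #B ≤ 2 ^ (n - L) * #(B.image e) := by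
    refine card_le_mul_card_image B _ fun z hz => ?_
    obtain ⟨y₀, hy₀, rfl⟩ := mem_image.1 hz
    refine card_le_two_pow_of_prefix hLn (mem_filter.1 hy₀).2 fun y hy => ?_
    rw [← (mem_filter.1 hy).2]
    exact hD y
  refine Nat.le_of_mul_le_mul_right ?_ (Nat.two_pow_pos (n - L))
  calc 2 ^ L * 2 ^ (n - L) = 2 ^ n := by rw [← pow_add, Nat.add_sub_cancel' hLn]
    _ ≤ k * #B := hB
    _ ≤ k * #(B.image e) * 2 ^ (n - L) := by rw [mul_assoc, mul_comm _ (2 ^ _)]; gcongr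

theorem pos_apply_of_forall_sum_eq [Fintype α] {β : Type*} [Fintype β] {P : α → ℝ} {w : ℝ}
    (hP : ∀ x, 0 ≤ P x) (hw : 0 < w) {E : α → β → α}
    (hsec : ∀ x', ∑ x, ∑ y, P x * w * (if E x y = x' then 1 else 0) = P x') {x : α}
    (hx : 0 < P x) (y : β) : 0 < P (E x y) := by
  have hterm : ∀ x' y', 0 ≤ P x' * w * (if E x' y' = E x y then 1 else 0) := fun x' y' =>
    mul_nonneg (mul_nonneg (hP x') hw.le) (by split_ifs <;> norm_num)
  rw [← hsec]
  calc 0 < P x * w * (if E x y = E x y then 1 else 0) := by simpa using mul_pos hx hw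
    _ ≤ ∑ y', P x * w * (if E x y' = E x y then 1 else 0) :=
      single_le_sum (fun y' _ => hterm x y') (mem_univ y)
    _ ≤ ∑ x', ∑ y', P x' * w * (if E x' y' = E x y then 1 else 0) :=
      single_le_sum (f := fun x' => ∑ y', P x' * w * (if E x' y' = E x y then 1 else 0))
        (fun x' _ => sum_nonneg fun y' _ => hterm x' y') (mem_univ x)

theorem exists_mem_two_mul_le_mul_sum [Fintype α] {k : ℕ} {δ : ℝ} (hδk : 2 ≤ δ * k)
    {X : Finset α} (hX : X.Nonempty) (ℓ : α → (Fin n → Bool) → ℕ)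
    (hspeed : ∑ x, ∑ y, X.uniformWeight x * ((2 : ℝ) ^ n)⁻¹ * (ℓ x y : ℝ) ≥ δ * n) :
    ∃ x ∈ X, 2 * n * 2 ^ n ≤ k * ∑ y, ℓ x y := by
  simp_rw [mul_assoc, ← mul_sum] at hspeed
  obtain ⟨x, hx, hle⟩ :=
    exists_pos_le_of_le_sum_mul (uniformWeight_nonneg X) (sum_uniformWeight hX) hspeed
  refine ⟨x, uniformWeight_pos_iff.1 hx, ?_⟩
  rw [le_inv_mul_iff₀ (by positivity)] at hle
  have hreal : (2 * n * 2 ^ n : ℝ) ≤ k * ∑ y, (ℓ x y : ℝ) :=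
    calc (2 * n * 2 ^ n : ℝ) ≤ δ * k * n * 2 ^ n := by gcongr
      _ = k * (2 ^ n * (δ * n)) := by ring
      _ ≤ k * ∑ y, (ℓ x y : ℝ) := mul_le_mul_of_nonneg_left hle k.cast_nonneg
  exact_mod_cast hreal

/-- An encoder `(cover, secret bits) ↦ stegotext` and a decoder `stegotext ↦ secret bits`. -/
abbrev Stegosystem (n : ℕ) : Type :=
  ((Fin n → Bool) → (Fin n → Bool) → (Fin n → Bool)) × ((Fin n → Bool) → List Bool)

theorem exists_card_eq_forall_two_pow_le (K : Stegosystem n → ℕ)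
    (hK : ∀ m, {St | K St < m}.Finite ∧ {St | K St < m}.ncard < 2 ^ m) {k : ℕ} (hk : 2 ≤ k) :
    ∃ X : Finset (Fin n → Bool), #X = 2 ^ (n - 1) ∧
      ∀ E D, 8 * k * k ≤ n → (∀ x y, D (E x y) <+: List.ofFn y) → (∀ x ∈ X, ∀ y, E x y ∈ X) →
        (∃ x ∈ X, 2 * n * 2 ^ n ≤ k * ∑ y, (D (E x y)).length) →
        2 ^ (n / (8 * k) + 1) ≤ K (E, D) := by
  by_cases hn : 8 * k * k ≤ n
  swap
  · obtain ⟨X, -, hX⟩ := exists_subset_card_eq (s := (univ : Finset (Fin n → Bool)))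
      (n := 2 ^ (n - 1)) (by simpa using Nat.pow_le_pow_right two_pos (n.sub_le 1))
    exact ⟨X, hX, fun _ _ h => absurd h hn⟩
  have hn0 : 0 < n := by nlinarith
  set L := n / k
  set m := 2 ^ (n / (8 * k) + 1)
  have hkr : k * (m + n) ≤ 2 ^ L := Nat.mul_two_pow_add_le_two_pow_div (by omega) hn
  have hLn : L ≤ n - 1 := by
    have : n / k ≤ n / 2 := Nat.div_le_div_left hk two_pos
    omega
  obtain ⟨hfin, hfincard⟩ := hK m
  let R : Stegosystem n × (Fin n → Bool) → Finset (Fin n → Bool) := fun p =>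
    ({y | L ≤ (p.1.2 (p.1.1 p.2 y)).length} : Finset (Fin n → Bool)).image (p.1.1 p.2)
  set F := {s ∈ (hfin.toFinset ×ˢ univ).image R | m + n ≤ #s}
  have hF : #F < 2 ^ (m + n) :=
    calc #F ≤ #(hfin.toFinset ×ˢ (univ : Finset (Fin n → Bool))) :=
          (card_filter_le _ _).trans card_image_le
      _ = #hfin.toFinset * 2 ^ n := by simp [card_product]
      _ < 2 ^ m * 2 ^ n := Nat.mul_lt_mul_of_pos_right
          (by rwa [← Set.ncard_eq_toFinset_card _ hfin]) (by positivity)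
      _ = 2 ^ (m + n) := (pow_add 2 m n).symm
  obtain ⟨X, hXcard, hXF⟩ := exists_card_eq_forall_not_subset (F := F)
    (fun s hs => (mem_filter.1 hs).2) hF
    ((Nat.le_mul_of_pos_left (m + n) (by omega : 0 < k)).trans
      (hkr.trans (Nat.pow_le_pow_right two_pos hLn)))
    (by rw [Fintype.card_fun, Fintype.card_bool, Fintype.card_fin, ← pow_succ']
        exact Nat.pow_le_pow_right two_pos (by omega))
  refine ⟨X, hXcard, fun E D _ hD hEX ⟨x, hx, hspeed⟩ => ?_⟩
  by_contra! hKlt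
  refine hXF (R ((E, D), x)) (mem_filter.2 ⟨mem_image_of_mem R
    (mem_product.2 ⟨hfin.mem_toFinset.2 hKlt, mem_univ x⟩), ?_⟩) ?_
  · exact Nat.le_of_mul_le_mul_left (hkr.trans (two_pow_le_mul_card_image (E x) D (hD x)
      (by omega) (Nat.mul_div_le n k) hspeed)) (by omega)
  · intro z hz
    obtain ⟨y, -, rfl⟩ := mem_image.1 hz
    exact hEX x hx y

end Stegosystem

/-- Main theorem: for every δ > 0 there is a family of distributions P_n on
{0,1}^n with Shannon entropy ≥ n-1 such that every perfectly secure, correctly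
decodable stegosystem with expected transmission speed ≥ δ has Kolmogorov
complexity K(St_n) with log₂ K(St_n) ≥ c·n for some c > 0 and all large n.
Here K is any complexity measure on stegosystems with the counting property. -/
theorem stmt11
    (K : ∀ n : ℕ,
      (((Fin n → Bool) → (Fin n → Bool) → (Fin n → Bool)) ×
        ((Fin n → Bool) → List Bool)) → ℕ)
    (hK : ∀ n m : ℕ,
      {St : ((Fin n → Bool) → (Fin n → Bool) → (Fin n → Bool)) ×
          ((Fin n → Bool) → List Bool) | K n St < m}.Finite ∧
      {St : ((Fin n → Bool) → (Fin n → Bool) → (Fin n → Bool)) ×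
          ((Fin n → Bool) → List Bool) | K n St < m}.ncard < 2 ^ m)
    (δ : ℝ) (hδ : 0 < δ) :
    ∃ P : (n : ℕ) → (Fin n → Bool) → ℝ,
      (∀ n : ℕ, (∀ x, 0 ≤ P n x) ∧ (∑ x, P n x) = 1 ∧
        -(∑ x, P n x * Real.logb 2 (P n x)) ≥ (n : ℝ) - 1) ∧
      ∃ c : ℝ, 0 < c ∧ ∃ N : ℕ, ∀ n : ℕ, N ≤ n →
        ∀ StEnc : (Fin n → Bool) → (Fin n → Bool) → (Fin n → Bool),
        ∀ StDec : (Fin n → Bool) → List Bool,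
          (∀ x y, StDec (StEnc x y) = (List.ofFn y).take (StDec (StEnc x y)).length) →
          (∀ x' : Fin n → Bool,
            (∑ x, ∑ y : Fin n → Bool,
              P n x * ((2 : ℝ) ^ n)⁻¹ * (if StEnc x y = x' then 1 else 0)) = P n x') →
          ((∑ x, ∑ y : Fin n → Bool,
              P n x * ((2 : ℝ) ^ n)⁻¹ * ((StDec (StEnc x y)).length : ℝ)) ≥ δ * n) →
          Real.logb 2 ((K n (StEnc, StDec) : ℕ) : ℝ) ≥ c * n := by
  set k := max 2 ⌈2 / δ⌉₊
  have hk : 2 ≤ k := le_max_left _ _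
  have hδk : 2 ≤ δ * k :=
    calc 2 = δ * (2 / δ) := by field_simp
      _ ≤ δ * k := mul_le_mul_of_nonneg_left
          ((Nat.le_ceil _).trans (by exact_mod_cast le_max_right _ _)) hδ.le
  choose X hXcard hX using fun n => exists_card_eq_forall_two_pow_le (K n) (hK n) hk
  have hXne : ∀ n, (X n).Nonempty := fun n => card_pos.1 (by rw [hXcard]; positivity)
  refine ⟨fun n => (X n).uniformWeight, fun n => ⟨uniformWeight_nonneg _,
    sum_uniformWeight (hXne n), sub_one_le_neg_sum_uniformWeight_mul_logb (hXcard n)⟩,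
    1 / (8 * k : ℕ), by positivity, 8 * k * k, fun n hn E D hD hsec hspeed => ?_⟩
  have hKge : 2 ^ (n / (8 * k) + 1) ≤ K n (E, D) := hX n E D hn
    (fun x y => List.prefix_iff_eq_take.2 (hD x y))
    (fun x hx y => uniformWeight_pos_iff.1 (pos_apply_of_forall_sum_eq (uniformWeight_nonneg _)
      (by positivity) hsec (uniformWeight_pos_iff.2 hx) y))
    (exists_mem_two_mul_le_mul_sum hδk (hXne n) (fun x y => (D (E x y)).length) hspeed)
  rw [ge_iff_le, one_div_mul_eq_div]
  exact div_le_logb_two_of_two_pow_le (by omega) hKge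
end

section
/- In the two-letter i.i.d. stegosystem, if the covertext letters are i.i.d. with P(a) = p, P(b) = 1 - p, and the secret bits are i.i.d. uniform and independent of the covertext, then the output of the encoder has the same distribution as the input covertext, i.e., the system is perfectly secure. -/
/-- The encoder of the two-letter i.i.d. stegosystem (a = false, b = true,
covertext given as a list of pairs; ab = (false,true) codes 0, ba codes 1). -/
def stegEncode : List (Bool × Bool) → (ℕ → Bool) → List (Bool × Bool)
  | [], _ => []
  | p :: rest, y =>
    if p.1 = p.2 then p :: stegEncode rest y
    else (y 0, !(y 0)) :: stegEncode rest (fun i => y (i + 1))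

/-!
Every mixed pair consumes one fresh uniform bit, so pair by pair the encoder is a memoryless
channel: `aa` and `bb` pass unchanged, while `ab` and `ba` each become `ab` or `ba` with
probability `1/2`. The i.i.d. law `w` is stationary for this single-pair kernel because
`w(ab) = w(ba)`, and a product law is stationary for the product kernel (`Fintype.prod_sum`).
-/

open Finset

theorem sum_pi_fin_succ {α M : Type*} [Fintype α] [AddCommMonoid M] (n : ℕ)
    (g : (Fin (n + 1) → α) → M) :
    ∑ x, g x = ∑ a, ∑ x : Fin n → α, g (Fin.cons a x) := by
  rw [← (Fin.consEquiv fun _ => α).sum_comp, Fintype.sum_prod_type]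
  rfl

theorem stegEncode_cons_of_eq {a : Bool × Bool} (h : a.1 = a.2) (l : List (Bool × Bool))
    (s : ℕ → Bool) : stegEncode (a :: l) s = a :: stegEncode l s := by
  simp [stegEncode, h]

theorem stegEncode_cons_of_ne {a : Bool × Bool} (h : a.1 ≠ a.2) (l : List (Bool × Bool))
    (s : ℕ → Bool) : stegEncode (a :: l) s = (s 0, !s 0) :: stegEncode l (Stream'.tail s) := by
  rw [stegEncode, if_neg h]
  rfl

def bitStream {N : ℕ} (y : Fin N → Bool) : ℕ → Bool :=
  fun i => if h : i < N then y ⟨i, h⟩ else false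

@[simp]
theorem bitStream_cons_zero {N : ℕ} (b : Bool) (y : Fin N → Bool) :
    bitStream (Fin.cons b y : Fin (N + 1) → Bool) 0 = b := by
  simp [bitStream]

@[simp]
theorem tail_bitStream_cons {N : ℕ} (b : Bool) (y : Fin N → Bool) :
    Stream'.tail (bitStream (Fin.cons b y : Fin (N + 1) → Bool)) = bitStream y := by
  funext i
  by_cases h : i < N
  · simp only [Stream'.tail, Stream'.get, bitStream, dif_pos h, dif_pos (Nat.succ_lt_succ h)]
    exact Fin.cons_succ (α := fun _ => Bool) b y ⟨i, h⟩
  · simp [Stream'.tail, Stream'.get, bitStream, h]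

noncomputable def pairKernel (a a' : Bool × Bool) : ℝ :=
  if a.1 = a.2 then (if a = a' then 1 else 0) else if a'.1 = a'.2 then 0 else 2⁻¹

theorem sum_mul_pairKernel {w : Bool × Bool → ℝ} (hw : w (false, true) = w (true, false))
    (a' : Bool × Bool) : ∑ a, w a * pairKernel a a' = w a' := by
  obtain ⟨_ | _, _ | _⟩ := a' <;> simp [Fintype.sum_prod_type, pairKernel] <;> linarith

/-- `n ≤ N` guarantees that the encoder never reads the zero padding of `bitStream`. -/
theorem avg_stegEncode_eq_prod_pairKernel {n N : ℕ} (hn : n ≤ N)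
    (x x' : Fin n → Bool × Bool) :
    ((2 : ℝ) ^ N)⁻¹ * ∑ y : Fin N → Bool,
        (if stegEncode (List.ofFn x) (bitStream y) = List.ofFn x' then 1 else 0) =
      ∏ i, pairKernel (x i) (x' i) := by
  induction n generalizing N with
  | zero => simp [stegEncode]
  | succ n ih =>
    rw [List.ofFn_succ, List.ofFn_succ, Fin.prod_univ_succ]
    by_cases h : (x 0).1 = (x 0).2
    · simp only [stegEncode_cons_of_eq h, List.cons.injEq, ite_and]
      rw [← ih (Nat.le_of_succ_le hn), pairKernel, if_pos h]
      split_ifs <;> simp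
    · obtain ⟨M, rfl⟩ : ∃ M, N = M + 1 := ⟨N - 1, by omega⟩
      rw [sum_pi_fin_succ]
      simp only [stegEncode_cons_of_ne h, bitStream_cons_zero, tail_bitStream_cons,
        List.cons.injEq, ite_and]
      rw [← ih (Nat.le_of_succ_le_succ hn), Fintype.sum_bool]
      generalize x' 0 = a'
      obtain ⟨_ | _, _ | _⟩ := a' <;> simp [pairKernel, h, pow_succ] <;> ring

theorem stmt14_general (m : ℕ) (p : ℝ)
    (w : Bool × Bool → ℝ)
    (hw : ∀ q : Bool × Bool,
      w q = (if q.1 then 1 - p else p) * (if q.2 then 1 - p else p)) :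
    ∀ x' : Fin m → Bool × Bool,
      (∑ x : Fin m → Bool × Bool, ∑ y : Fin m → Bool,
        (∏ i, w (x i)) * ((2 : ℝ) ^ m)⁻¹ *
          (if stegEncode (List.ofFn x) (fun i => if h : i < m then y ⟨i, h⟩ else false)
              = List.ofFn x' then 1 else 0))
        = ∏ i, w (x' i) := by
  intro x'
  have hw_mixed : w (false, true) = w (true, false) := by simp [hw, mul_comm]
  calc _ = ∑ x : Fin m → Bool × Bool, ∏ i, w (x i) * pairKernel (x i) (x' i) := by
        refine sum_congr rfl fun x _ => ?_
        rw [prod_mul_distrib, ← avg_stegEncode_eq_prod_pairKernel le_rfl, mul_sum, mul_sum]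
        simp only [mul_assoc]
        rfl
    _ = ∏ i, ∑ a, w a * pairKernel a (x' i) :=
        (Fintype.prod_sum fun i a => w a * pairKernel a (x' i)).symm
    _ = ∏ i, w (x' i) := by simp only [sum_mul_pairKernel hw_mixed]

/-- Perfect security of the two-letter i.i.d. stegosystem: if the covertext
letters are i.i.d. with P(a) = p, P(b) = 1-p (so a pair q has probability
w(q)), and the secret bits are i.i.d. uniform and independent of the covertext,
then the encoder's output has the same distribution as the input covertext. -/
theorem stmt14 (m : ℕ) (p : ℝ) (hp0 : 0 ≤ p) (hp1 : p ≤ 1)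
    (w : Bool × Bool → ℝ)
    (hw : ∀ q : Bool × Bool,
      w q = (if q.1 then 1 - p else p) * (if q.2 then 1 - p else p)) :
    ∀ x' : Fin m → Bool × Bool,
      (∑ x : Fin m → Bool × Bool, ∑ y : Fin m → Bool,
        (∏ i, w (x i)) * ((2 : ℝ) ^ m)⁻¹ *
          (if stegEncode (List.ofFn x) (fun i => if h : i < m then y ⟨i, h⟩ else false)
              = List.ofFn x' then 1 else 0))
        = ∏ i, w (x' i) :=
  stmt14_general m p w hw
end

section
/- Let X be finite, μ a distribution on X with full support, and Enc : X × {0,1}^* → X perfectly secure (output distribution = μ when input ∼ μ and secret bits uniform). If D ⊆ X is closed under encoding in the sense that Enc(x, u) ∈ D for all x ∈ D and all u, and Enc(x, u) ∉ D whenever x ∉ D and u starts with 1, then D = X. -/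
/-!
Perfect security says that μ is invariant under the random map `x ↦ Enc x y`, `y` uniform. Hence
the mass of the complement `C` of `D` is the mass of the pairs `(x, y)` sent into `C`; these all
lie in `C × {y | y 0 = true}`, whose mass is `μ(C) / 2`. So `μ(C) ≤ μ(C) / 2`, and full support
forces `C = ∅`.
-/

open Finset

section

variable {α β : Type*} [Fintype α] [Fintype β] [DecidableEq α]

theorem sum_sum_sum_mul_ite_eq_sum_sum_ite_mem (w : α → β → ℝ) (f : α → β → α) (s : Finset α) :
    ∑ x' ∈ s, ∑ x, ∑ y, w x y * (if f x y = x' then 1 else 0) =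
      ∑ x, ∑ y, if f x y ∈ s then w x y else 0 := by
  rw [sum_comm]
  refine sum_congr rfl fun x _ => ?_
  rw [sum_comm]
  refine sum_congr rfl fun y _ => ?_
  simp_rw [mul_ite, mul_one, mul_zero]
  exact sum_ite_eq s (f x y) _

theorem eq_empty_of_invariant_of_preimage_subset {μ : α → ℝ} {ν : β → ℝ} (hμ : ∀ x, 0 < μ x)
    (hν : ∀ y, 0 ≤ ν y) {p : β → Prop} [DecidablePred p] (hp : ∑ y with p y, ν y < 1)
    {f : α → β → α}
    (hf : ∀ x', ∑ x, ∑ y, μ x * ν y * (if f x y = x' then 1 else 0) = μ x')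
    {C : Finset α} (hC : ∀ x y, f x y ∈ C → x ∈ C ∧ p y) : C = ∅ := by
  set M := ∑ x ∈ C, μ x
  have hM : M ≤ M * ∑ y with p y, ν y :=
    calc M = ∑ x, ∑ y, if f x y ∈ C then μ x * ν y else 0 := by
          rw [← sum_sum_sum_mul_ite_eq_sum_sum_ite_mem]
          exact sum_congr rfl fun x' _ => (hf x').symm
      _ ≤ ∑ x, ∑ y, if x ∈ C ∧ p y then μ x * ν y else 0 := by
          gcongr with x _ y _
          split_ifs with h h'
          · exact le_rfl
          · exact absurd (hC x y h) h'
          · exact mul_nonneg (hμ x).le (hν y)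
          · exact le_rfl
      _ = M * ∑ y with p y, ν y := by
          rw [sum_mul_sum]
          simp_rw [← Fintype.sum_ite_mem C, sum_filter, ite_and, sum_ite_irrel, sum_const_zero]
  by_contra hne
  have hMpos : 0 < M := sum_pos (fun x _ => hμ x) (nonempty_iff_ne_empty.mpr hne)
  nlinarith

end

theorem card_filter_apply_zero_eq {β : Type*} [Fintype β] [DecidableEq β] (m : ℕ) (b : β) :
    #{y : Fin (m + 1) → β | y 0 = b} = Fintype.card β ^ m := by
  have hcons : ({y : Fin (m + 1) → β | y 0 = b} : Finset _) =
      univ.image (Fin.cons (α := fun _ => β) b) := by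
    ext y
    simp only [mem_filter, mem_univ, true_and, mem_image]
    exact ⟨fun h => ⟨Fin.tail y, by rw [← h, Fin.cons_self_tail]⟩, by rintro ⟨z, rfl⟩; rfl⟩
  rw [hcons, card_image_of_injective _ (Fin.cons_right_injective (α := fun _ => β) b), card_univ,
    Fintype.card_fun, Fintype.card_fin]

theorem stmt19_general {α : Type*} [Fintype α] [DecidableEq α] (m : ℕ)
    (μ : α → ℝ) (hpos : ∀ x, 0 < μ x)
    (Enc : α → (Fin (m + 1) → Bool) → α)
    (hsec : ∀ x' : α,
      (∑ x, ∑ y : Fin (m + 1) → Bool,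
        μ x * ((2 : ℝ) ^ (m + 1))⁻¹ * (if Enc x y = x' then 1 else 0)) = μ x')
    (D : Set α)
    (honly : ∀ x y, Enc x y ∉ D → x ∉ D ∧ y 0 = true) :
    D = Set.univ := by
  classical
  have hfirst : ∑ y : Fin (m + 1) → Bool with y 0 = true, ((2 : ℝ) ^ (m + 1))⁻¹ < 1 := by
    rw [sum_const, card_filter_apply_zero_eq, Fintype.card_bool, nsmul_eq_mul, pow_succ]
    push_cast
    rw [mul_inv, ← mul_assoc, mul_inv_cancel₀ (by positivity)]
    norm_num
  have hempty : Dᶜ.toFinset = ∅ :=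
    eq_empty_of_invariant_of_preimage_subset hpos (fun _ => by positivity) hfirst hsec
      (fun x y h => by simpa using honly x y (by simpa using h))
  simpa using hempty

/-- Coverage argument, abstract form: X finite, μ a full-support distribution,
Enc perfectly secure (output distribution equals μ when the covertext is
μ-distributed and the secret bits are uniform and independent). If D is closed
under encoding and its complement receives outputs only from inputs outside D
whose secret message starts with 1, then D = X. -/
theorem stmt19 {α : Type*} [Fintype α] [DecidableEq α] (m : ℕ)
    (μ : α → ℝ) (hpos : ∀ x, 0 < μ x) (hsum : ∑ x, μ x = 1)
    (Enc : α → (Fin (m + 1) → Bool) → α)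
    (hsec : ∀ x' : α,
      (∑ x, ∑ y : Fin (m + 1) → Bool,
        μ x * ((2 : ℝ) ^ (m + 1))⁻¹ * (if Enc x y = x' then 1 else 0)) = μ x')
    (D : Set α)
    (hclosed : ∀ x ∈ D, ∀ y, Enc x y ∈ D)
    (honly : ∀ x y, Enc x y ∉ D → x ∉ D ∧ y 0 = true) :
    D = Set.univ :=
  stmt19_general m μ hpos Enc hsec D honly
end
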